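/- arXiv:2507.10212 — 4 statements merged into one kernel-verified Lean document; each statement's English description precedes it below -/
import Mathlib

section
/- Let n ≥ 3 be an integer, let I ⊆ ℝ be a nonempty open interval, let R and R̄ be real constants, and let h : I → ℝ be a smooth positive function satisfying R·h(t)² = R̄ − (n−1)(n−2)·h'(t)² − 2(n−1)·h(t)·h''(t) for all t ∈ I. Then for all t ∈ I, h'''(t) + (n−1)·h'(t)·h''(t)/h(t) + (R/(n−1))·h'(t) = 0. -/
/-- Differentiating the constant-scalar-curvature equation of the
warped product `I ×_h N` yields the third-order ODE for the warping function. -/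
theorem stmt_0 (n : ℕ) (hn : 3 ≤ n) (I : Set ℝ) (hIopen : IsOpen I)
    (hIne : I.Nonempty) (hIint : I.OrdConnected)
    (R Rbar : ℝ) (h h' h'' h''' : ℝ → ℝ)
    (hsmooth : ContDiffOn ℝ (⊤ : ℕ∞) h I)
    (hpos : ∀ t ∈ I, 0 < h t)
    (hd1 : ∀ t ∈ I, HasDerivAt h (h' t) t)
    (hd2 : ∀ t ∈ I, HasDerivAt h' (h'' t) t)
    (hd3 : ∀ t ∈ I, HasDerivAt h'' (h''' t) t)
    (heq : ∀ t ∈ I, R * (h t) ^ 2 =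
      Rbar - ((n : ℝ) - 1) * ((n : ℝ) - 2) * (h' t) ^ 2
        - 2 * ((n : ℝ) - 1) * h t * h'' t) :
    ∀ t ∈ I, h''' t + ((n : ℝ) - 1) * (h' t) * (h'' t) / h t
      + (R / ((n : ℝ) - 1)) * h' t = 0 := by
  intro t ht
  have hne : h t ≠ 0 := ne_of_gt (hpos t ht)
  have hn1 : ((n : ℝ) - 1) ≠ 0 := by
    have : (3 : ℝ) ≤ (n : ℝ) := by exact_mod_cast hn
    linarith
  -- LHS derivative
  have hf : HasDerivAt (fun s => R * (h s) ^ 2) (R * (2 * h t * h' t)) t :=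
    (((hd1 t ht).pow 2).const_mul R).congr_deriv (by ring)
  -- RHS derivative
  have hg : HasDerivAt (fun s => Rbar - ((n : ℝ) - 1) * ((n : ℝ) - 2) * (h' s) ^ 2
        - 2 * ((n : ℝ) - 1) * h s * h'' s)
      (- (((n : ℝ) - 1) * ((n : ℝ) - 2)) * (2 * h' t * h'' t)
        - 2 * ((n : ℝ) - 1) * (h' t * h'' t + h t * h''' t)) t := by
    have h1 : HasDerivAt (fun s => Rbar - ((n : ℝ) - 1) * ((n : ℝ) - 2) * (h' s) ^ 2)
        (- (((n : ℝ) - 1) * ((n : ℝ) - 2)) * (2 * h' t * h'' t)) t := by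
      have := (((hd2 t ht).pow 2).const_mul (((n : ℝ) - 1) * ((n : ℝ) - 2))).const_sub Rbar
      exact this.congr_deriv (by ring)
    have h2 : HasDerivAt (fun s => 2 * ((n : ℝ) - 1) * h s * h'' s)
        (2 * ((n : ℝ) - 1) * (h' t * h'' t + h t * h''' t)) t := by
      have := (((hd1 t ht).const_mul (2 * ((n : ℝ) - 1))).mul (hd3 t ht))
      exact this.congr_deriv (by ring)
    exact h1.sub h2
  -- the two functions agree near t
  have hev : (fun s => R * (h s) ^ 2) =ᶠ[nhds t]
      (fun s => Rbar - ((n : ℝ) - 1) * ((n : ℝ) - 2) * (h' s) ^ 2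
        - 2 * ((n : ℝ) - 1) * h s * h'' s) := by
    filter_upwards [hIopen.mem_nhds ht] with s hs using heq s hs
  have hf' := hf.congr_of_eventuallyEq hev.symm
  have key := hf'.unique hg
  field_simp
  nlinarith [key, hpos t ht]
end

section
/- Let n ≥ 3 be an integer, let I ⊆ ℝ be a nonempty open connected interval, let R and R̄ be real constants, and let h : I → ℝ be a smooth positive function satisfying R·h(t)² = R̄ − (n−1)(n−2)·h'(t)² − 2(n−1)·h(t)·h''(t) for all t ∈ I. Then there exists a constant c₁ ∈ ℝ such that for all t ∈ I, h''(t) + (R/(n(n−1)))·h(t) = c₁·h(t)^{1−n}. -/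
/-- A first integration of the warping-function equation: there is a
constant `c₁` with `h'' + (R/(n(n-1))) h = c₁ h^{1-n}` on `I`. -/
theorem stmt_1 (n : ℕ) (hn : 3 ≤ n) (I : Set ℝ) (hIopen : IsOpen I)
    (hIne : I.Nonempty) (hIint : I.OrdConnected) (hIconn : IsConnected I)
    (R Rbar : ℝ) (h h' h'' : ℝ → ℝ)
    (hsmooth : ContDiffOn ℝ (⊤ : ℕ∞) h I)
    (hpos : ∀ t ∈ I, 0 < h t)
    (hd1 : ∀ t ∈ I, HasDerivAt h (h' t) t)
    (hd2 : ∀ t ∈ I, HasDerivAt h' (h'' t) t)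
    (heq : ∀ t ∈ I, R * (h t) ^ 2 =
      Rbar - ((n : ℝ) - 1) * ((n : ℝ) - 2) * (h' t) ^ 2
        - 2 * ((n : ℝ) - 1) * h t * h'' t) :
    ∃ c₁ : ℝ, ∀ t ∈ I,
      h'' t + (R / ((n : ℝ) * ((n : ℝ) - 1))) * h t = c₁ * h t ^ ((1 : ℤ) - (n : ℤ)) := by
  obtain ⟨k, rfl⟩ : ∃ k, n = k + 3 := ⟨n - 3, by omega⟩
  clear hn
  -- the first integral
  set F : ℝ → ℝ := fun t =>
    Rbar * ((k : ℝ) + 3) * h t ^ (k + 1)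
      - ((k : ℝ) + 3) * ((k : ℝ) + 2) * ((k : ℝ) + 1) * (h t ^ (k + 1) * (h' t) ^ 2)
      - R * ((k : ℝ) + 1) * h t ^ (k + 3) with hF
  have hFderiv : ∀ t ∈ I, HasDerivAt F 0 t := by
    intro t ht
    have d1 := hd1 t ht
    have d2 := hd2 t ht
    have dp1 : HasDerivAt (fun s => h s ^ (k + 1))
        (((k : ℝ) + 1) * h t ^ k * h' t) t := by
      have := d1.fun_pow (k + 1)
      simpa [Nat.cast_add] using this
    have dp3 : HasDerivAt (fun s => h s ^ (k + 3))
        (((k : ℝ) + 3) * h t ^ (k + 2) * h' t) t := by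
      have := d1.fun_pow (k + 3)
      simpa [Nat.cast_add] using this
    have dq : HasDerivAt (fun s => (h' s) ^ 2) (2 * h' t * h'' t) t := by
      simpa [mul_comm] using d2.fun_pow 2
    have dF : HasDerivAt F
        (Rbar * ((k : ℝ) + 3) * (((k : ℝ) + 1) * h t ^ k * h' t)
          - ((k : ℝ) + 3) * ((k : ℝ) + 2) * ((k : ℝ) + 1) *
            ((((k : ℝ) + 1) * h t ^ k * h' t) * (h' t) ^ 2
              + h t ^ (k + 1) * (2 * h' t * h'' t))
          - R * ((k : ℝ) + 1) * (((k : ℝ) + 3) * h t ^ (k + 2) * h' t)) t :=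
      ((dp1.const_mul (Rbar * ((k : ℝ) + 3))).sub
        ((dp1.mul dq).const_mul (((k : ℝ) + 3) * ((k : ℝ) + 2) * ((k : ℝ) + 1)))).sub
        (dp3.const_mul (R * ((k : ℝ) + 1)))
    have key := heq t ht
    push_cast at key
    convert dF using 1
    linear_combination (((k : ℝ) + 3) * ((k : ℝ) + 1) * h t ^ k * h' t) * key
  obtain ⟨t₀, ht₀⟩ := hIne
  have hconst : ∀ t ∈ I, F t = F t₀ := by
    intro t ht
    refine (hIint.convex).is_const_of_fderivWithin_eq_zero (𝕜 := ℝ) ?_ ?_ ht ht₀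
    · intro x hx
      exact ((hFderiv x hx).differentiableAt).differentiableWithinAt
    · intro x hx
      rw [fderivWithin_of_isOpen hIopen hx, (hFderiv x hx).hasFDerivAt.fderiv]
      ext y
      simp
  refine ⟨F t₀ / (2 * (((k : ℝ) + 3) * ((k : ℝ) + 2))), fun t ht => ?_⟩
  have hpt := hpos t ht
  have key := heq t ht
  push_cast at key ⊢
  have hht : h t ≠ 0 := ne_of_gt hpt
  have main2 : 2 * (((k : ℝ) + 3) * ((k : ℝ) + 2)) * (h t ^ (k + 2)) * h'' t
      + 2 * R * h t ^ (k + 3) = F t₀ := by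
    have hc := hconst t ht
    simp only [hF] at hc
    linear_combination (((k : ℝ) + 3) * h t ^ (k + 1)) * key + hc
  have hrw : ((k : ℝ) + 3) * ((k : ℝ) + 3 - 1) = ((k : ℝ) + 3) * ((k : ℝ) + 2) := by ring
  rw [hrw]
  have hzp : h t ^ ((1 : ℤ) - ((k : ℤ) + 3)) = (h t ^ (k + 2 : ℕ))⁻¹ := by
    have e : (1 : ℤ) - ((k : ℤ) + 3) = -((k + 2 : ℕ) : ℤ) := by push_cast; ring
    rw [e, zpow_neg, zpow_natCast]
  rw [hzp]
  have hp : h t ^ (k + 2) ≠ 0 := pow_ne_zero _ hht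
  set a : ℝ := ((k : ℝ) + 3) * ((k : ℝ) + 2) with ha
  have ha0 : a ≠ 0 := by rw [ha]; positivity
  clear_value a
  field_simp
  linear_combination main2
end

section
/- Let n ≥ 3 be an integer, let I ⊆ ℝ be a nonempty open connected interval, let R and R̄ be real constants, and let h : I → ℝ be a smooth positive function satisfying R·h(t)² = R̄ − (n−1)(n−2)·h'(t)² − 2(n−1)·h(t)·h''(t) for all t ∈ I. Then there exists a constant τ ∈ ℝ such that for all t ∈ I, h'(t)² + (R/(n(n−1)))·h(t)² − R̄/((n−1)(n−2)) = τ·h(t)^{2−n}. -/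
/-- The first-order integral of the warping-function equation: there is a
constant `τ` with `h'² + (R/(n(n-1))) h² − R̄/((n-1)(n-2)) = τ h^{2-n}` on `I`. -/
theorem stmt_2 (n : ℕ) (hn : 3 ≤ n) (I : Set ℝ) (hIopen : IsOpen I)
    (hIne : I.Nonempty) (hIint : I.OrdConnected) (hIconn : IsConnected I)
    (R Rbar : ℝ) (h h' h'' : ℝ → ℝ)
    (hsmooth : ContDiffOn ℝ (⊤ : ℕ∞) h I)
    (hpos : ∀ t ∈ I, 0 < h t)
    (hd1 : ∀ t ∈ I, HasDerivAt h (h' t) t)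
    (hd2 : ∀ t ∈ I, HasDerivAt h' (h'' t) t)
    (heq : ∀ t ∈ I, R * (h t) ^ 2 =
      Rbar - ((n : ℝ) - 1) * ((n : ℝ) - 2) * (h' t) ^ 2
        - 2 * ((n : ℝ) - 1) * h t * h'' t) :
    ∃ τ : ℝ, ∀ t ∈ I,
      (h' t) ^ 2 + (R / ((n : ℝ) * ((n : ℝ) - 1))) * (h t) ^ 2
        - Rbar / (((n : ℝ) - 1) * ((n : ℝ) - 2)) = τ * h t ^ ((2 : ℤ) - (n : ℤ)) := by
  obtain ⟨k, rfl⟩ : ∃ k, n = k + 3 := ⟨n - 3, by omega⟩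
  push_cast at heq ⊢
  have hk0 : (0:ℝ) ≤ (k:ℝ) := Nat.cast_nonneg k
  have hn0 : ((k:ℝ) + 3) ≠ 0 := by positivity
  have hn1 : ((k:ℝ) + 2) ≠ 0 := by positivity
  have hn2 : ((k:ℝ) + 1) ≠ 0 := by positivity
  set a : ℝ := R / (((k:ℝ) + 3) * (((k:ℝ) + 3) - 1)) with ha
  set b : ℝ := Rbar / ((((k:ℝ) + 3) - 1) * (((k:ℝ) + 3) - 2)) with hb
  have ha' : a * (((k:ℝ) + 3) * ((k:ℝ) + 2)) = R := by
    rw [ha, show ((k:ℝ) + 3 - 1) = (k:ℝ) + 2 by ring]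
    exact div_mul_cancel₀ R (mul_ne_zero hn0 hn1)
  have hb' : b * (((k:ℝ) + 2) * ((k:ℝ) + 1)) = Rbar := by
    rw [hb, show ((k:ℝ) + 3 - 1) = (k:ℝ) + 2 by ring, show ((k:ℝ) + 3 - 2) = (k:ℝ) + 1 by ring]
    exact div_mul_cancel₀ Rbar (mul_ne_zero hn1 hn2)
  set F : ℝ → ℝ := fun t => ((h' t) ^ 2 + a * (h t) ^ 2 - b) * (h t) ^ (k + 1) with hF
  have hFd : ∀ t ∈ I, HasDerivAt F 0 t := by
    intro t ht
    have d1 := hd1 t ht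
    have d2 := hd2 t ht
    have dG : HasDerivAt (fun t => (h' t) ^ 2 + a * (h t) ^ 2 - b)
        (2 * h' t * h'' t + a * (2 * h t * h' t)) t := by
      have := ((d2.fun_pow 2).add ((d1.fun_pow 2).const_mul a)).sub_const b
      refine this.congr_deriv ?_
      push_cast
      ring
    have dP : HasDerivAt (fun t => (h t) ^ (k + 1))
        (((k:ℝ) + 1) * (h t) ^ k * h' t) t := by
      have := d1.fun_pow (k + 1)
      refine this.congr_deriv ?_
      push_cast
      ring
    have key := heq t ht
    have main : ((k:ℝ) + 2) *
        ((2 * h' t * h'' t + a * (2 * h t * h' t)) * (h t) ^ (k + 1)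
          + ((h' t) ^ 2 + a * (h t) ^ 2 - b) * (((k:ℝ) + 1) * (h t) ^ k * h' t)) = 0 := by
      linear_combination ((h t) ^ k * h' t) * key
        + ((h t) ^ k * h' t * (h t) ^ 2) * ha'
        - ((h t) ^ k * h' t) * hb'
    have hzero : (2 * h' t * h'' t + a * (2 * h t * h' t)) * (h t) ^ (k + 1)
          + ((h' t) ^ 2 + a * (h t) ^ 2 - b) * (((k:ℝ) + 1) * (h t) ^ k * h' t) = 0 := by
      rcases mul_eq_zero.mp main with hc | hc
      · exact absurd hc hn1
      · exact hc
    simpa [hzero] using dG.fun_mul dP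
  obtain ⟨t₀, ht₀⟩ := hIne
  refine ⟨F t₀, fun t ht => ?_⟩
  have hconv : Convex ℝ I := convex_iff_ordConnected.mpr hIint
  have hFdiff : DifferentiableOn ℝ F I := fun x hx =>
    ((hFd x hx).differentiableAt).differentiableWithinAt
  have hconst : F t = F t₀ := by
    apply hconv.is_const_of_fderivWithin_eq_zero hFdiff _ ht ht₀
    intro x hx
    have h0 : fderiv ℝ F x = 0 := by
      have := (hFd x hx).hasFDerivAt.fderiv
      rw [this]; ext y; simp
    rw [fderivWithin_eq_fderiv (hIopen.uniqueDiffOn x hx) ((hFd x hx).differentiableAt), h0]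
  have hhne : h t ≠ 0 := ne_of_gt (hpos t ht)
  have hpne : (h t) ^ (k + 1) ≠ 0 := pow_ne_zero _ hhne
  rw [show ((2 : ℤ) - ((k:ℤ) + 3)) = -((k:ℤ) + 1) by ring, zpow_neg]
  have hz2 : h t ^ (((k:ℤ)) + 1) = (h t) ^ (k + 1) := by norm_cast
  rw [hz2, eq_mul_inv_iff_mul_eq₀ hpne]
  exact hconst
end

section
/- Let n ≥ 3 be an integer, let E be a symmetric real n×n matrix with trace zero, let v ∈ ℝⁿ, set w = E v, and define T_{ijk} = ((n−1)/(n−2))·(E_{ik}·v_j − E_{ij}·v_k) + (1/(n−2))·(δ_{ik}·w_j − δ_{ij}·w_k) for 1 ≤ i, j, k ≤ n, where δ is the Kronecker delta. Then Σ_{i,j,k} E_{ik}·T_{ijk}·v_j = ((n−2)/(2(n−1)))·Σ_{i,j,k} T_{ijk}². -/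
/-!
The tensor `T` is `X i j k - X i k j` for `X i j k = a E_ik v_j + b δ_ik w_j`, with
`a = (n-1)/(n-2)` and `b = 1/(n-2)`. Antisymmetry in `(j, k)` gives `‖T‖² = 2 ⟨T, X⟩`, and
`⟨T, X⟩ = a E_ik T_ijk v_j + b (∑_i T_iji) w_j`. The trace `∑_i T_iji` equals `(b (n-1) - a) w_j`
because `E` is trace-free and symmetric, and this vanishes for the chosen `a` and `b`.
-/

open Finset

section

variable {ι : Type*} [Fintype ι]

theorem sum_sq_eq_two_mul_sum_mul_of_eq_sub_swap (T X : ι → ι → ι → ℝ)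
    (hT : ∀ i j k, T i j k = X i j k - X i k j) :
    ∑ i, ∑ j, ∑ k, T i j k ^ 2 = 2 * ∑ i, ∑ j, ∑ k, T i j k * X i j k := by
  have hswap : ∑ i, ∑ j, ∑ k, T i j k * X i k j = -∑ i, ∑ j, ∑ k, T i j k * X i j k := by
    rw [← sum_neg_distrib]
    refine sum_congr rfl fun i _ => ?_
    rw [sum_comm, ← sum_neg_distrib]
    refine sum_congr rfl fun j _ => ?_
    rw [← sum_neg_distrib]
    refine sum_congr rfl fun k _ => ?_
    rw [hT i k j, hT i j k]
    ring
  have hsq : ∀ i j k, T i j k ^ 2 = T i j k * X i j k - T i j k * X i k j := fun i j k => by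
    rw [sq, ← mul_sub, ← hT]
  simp only [hsq, sum_sub_distrib, hswap]
  ring

variable [DecidableEq ι]

theorem sum_mul_ite_eq_sum_diag_mul (T : ι → ι → ι → ℝ) (f : ι → ℝ) :
    ∑ i, ∑ j, ∑ k, T i j k * (if i = k then f j else 0) = ∑ j, (∑ i, T i j i) * f j := by
  simp only [mul_ite, mul_zero, sum_ite_eq, mem_univ, if_true, sum_mul]
  exact sum_comm

theorem sum_diag_eq_of_trace_eq_zero (E : ι → ι → ℝ) (hsymm : ∀ i j, E i j = E j i)
    (htr : ∑ i, E i i = 0) (v w : ι → ℝ) (hw : ∀ i, w i = ∑ l, E i l * v l) (a b : ℝ)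
    (T : ι → ι → ι → ℝ)
    (hT : ∀ i j k, T i j k = a * (E i k * v j - E i j * v k)
      + b * ((if i = k then (1 : ℝ) else 0) * w j - (if i = j then (1 : ℝ) else 0) * w k))
    (j : ι) :
    ∑ i, T i j i = (b * (Fintype.card ι - 1) - a) * w j := by
  have hEv : ∑ i, E i j * v i = w j := by
    rw [hw j]
    exact sum_congr rfl fun i _ => by rw [hsymm]
  simp only [hT, if_true, one_mul, ite_mul, zero_mul, mul_sub, sum_add_distrib, sum_sub_distrib,
    ← mul_sum, ← sum_mul, sum_ite_eq', mem_univ, htr, sum_const, card_univ, nsmul_eq_mul]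
  rw [hEv]
  ring

end

/-- For the auxiliary 3-tensor `T` built from a trace-free symmetric
matrix `E` and a vector `v`, one has `E_{ik} T_{ijk} v_j = ((n-2)/(2(n-1))) ‖T‖²`. -/
theorem stmt_7 (n : ℕ) (hn : 3 ≤ n) (E : Fin n → Fin n → ℝ)
    (hsymm : ∀ i j, E i j = E j i) (htr : ∑ i, E i i = 0)
    (v : Fin n → ℝ) (w : Fin n → ℝ) (hw : ∀ i, w i = ∑ l, E i l * v l)
    (T : Fin n → Fin n → Fin n → ℝ)
    (hT : ∀ i j k, T i j k =
      (((n : ℝ) - 1) / ((n : ℝ) - 2)) * (E i k * v j - E i j * v k)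
        + (1 / ((n : ℝ) - 2)) * ((if i = k then (1 : ℝ) else 0) * w j
          - (if i = j then (1 : ℝ) else 0) * w k)) :
    ∑ i, ∑ j, ∑ k, E i k * T i j k * v j =
      (((n : ℝ) - 2) / (2 * ((n : ℝ) - 1))) * ∑ i, ∑ j, ∑ k, (T i j k) ^ 2 := by
  set a : ℝ := ((n : ℝ) - 1) / ((n : ℝ) - 2)
  set b : ℝ := 1 / ((n : ℝ) - 2)
  have hdiag : ∀ j, ∑ i, T i j i = 0 := fun j => by
    rw [sum_diag_eq_of_trace_eq_zero E hsymm htr v w hw a b T hT, Fintype.card_fin]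
    simp only [a, b]
    ring
  have hnorm := sum_sq_eq_two_mul_sum_mul_of_eq_sub_swap T
    (fun i j k => a * (E i k * v j) + if i = k then b * w j else 0)
    (fun i j k => by rw [hT]; split_ifs <;> ring)
  simp only [mul_add, sum_add_distrib, sum_mul_ite_eq_sum_diag_mul, hdiag, zero_mul,
    sum_const_zero, add_zero] at hnorm
  have hcontract : ∑ i, ∑ j, ∑ k, T i j k * (a * (E i k * v j)) =
      a * ∑ i, ∑ j, ∑ k, E i k * T i j k * v j := by
    simp only [mul_sum]
    exact sum_congr rfl fun i _ => sum_congr rfl fun j _ => sum_congr rfl fun k _ => by ring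
  have hn' : (3 : ℝ) ≤ n := by exact_mod_cast hn
  have hn1 : (n : ℝ) - 1 ≠ 0 := by linarith
  have hn2 : (n : ℝ) - 2 ≠ 0 := by linarith
  rw [hnorm, hcontract]
  simp only [a]
  field_simp
end
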